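/- Let {S, T, E, N, x} be a data set as above with P := M_{F^S}^{[*]} M_{F^S} ≥ x x* and P positive definite, and let K̃_S(z,ζ) = K_S(z,ζ) − F^S(z) P^{-1} F^S(ζ)*. Then the problem AIP has a unique solution if and only if ‖P^{-1/2} x‖ = 1 or K̃_S(z,ζ) ≡ 0 on D × D. -/
import Mathlib


open ContinuousLinearMap Metric
open scoped InnerProductSpace ComplexOrder

set_option maxHeartbeats 1000000
noncomputable section

/-- The de Branges–Rovnyak kernel `K_S(z,ζ) = (I − S(z)S(ζ)*)/(1 − z ζ̄)`. -/
def dbrKernel {U Y : Type*}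
    [NormedAddCommGroup U] [InnerProductSpace ℂ U] [CompleteSpace U]
    [NormedAddCommGroup Y] [InnerProductSpace ℂ Y] [CompleteSpace Y]
    (S : ℂ → (U →L[ℂ] Y)) (z ζ : ℂ) : Y →L[ℂ] Y :=
  (1 - z * (starRingEnd ℂ) ζ)⁻¹ • (1 - (S z) ∘L (adjoint (S ζ)))

/-- The operator-valued Schur class on the unit disk. -/
def IsSchur {U Y : Type*}
    [NormedAddCommGroup U] [NormedSpace ℂ U]
    [NormedAddCommGroup Y] [NormedSpace ℂ Y]
    (S : ℂ → (U →L[ℂ] Y)) : Prop :=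
  AnalyticOnNhd ℂ S (ball (0:ℂ) 1) ∧ ∀ z ∈ ball (0:ℂ) 1, ‖S z‖ ≤ 1

/-- `H` (with realization map `J` and kernel elements `k`) is the reproducing kernel
Hilbert space of the de Branges–Rovnyak kernel `K_S`. -/
structure IsDBRSpace {U Y : Type*}
    [NormedAddCommGroup U] [InnerProductSpace ℂ U] [CompleteSpace U]
    [NormedAddCommGroup Y] [InnerProductSpace ℂ Y] [CompleteSpace Y]
    (S : ℂ → (U →L[ℂ] Y)) (H : Type*) [NormedAddCommGroup H]
    [InnerProductSpace ℂ H] [CompleteSpace H]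
    (J : H →ₗ[ℂ] (ℂ → Y)) (k : ℂ → Y → H) : Prop where
  ext : ∀ f g : H, (∀ z ∈ ball (0:ℂ) 1, J f z = J g z) → f = g
  kernel_eq : ∀ ζ ∈ ball (0:ℂ) 1, ∀ y : Y, ∀ z ∈ ball (0:ℂ) 1,
    J (k ζ y) z = dbrKernel S z ζ y
  reproducing : ∀ ζ ∈ ball (0:ℂ) 1, ∀ (y : Y) (f : H),
    ⟪k ζ y, f⟫_ℂ = ⟪y, J f ζ⟫_ℂ

/-- The rank-one operator `x x* : y ↦ ⟨y, x⟩ x`. -/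
def rankOne {X : Type*} [NormedAddCommGroup X] [InnerProductSpace ℂ X]
    (x : X) : X →L[ℂ] X :=
  (innerSL ℂ x).smulRight x

/-- Assume `P := M_{F^S}^{[*]} M_{F^S} ≥ x x*` and that `P` is positive
definite (invertible), and let `K̃_S(z,ζ) = K_S(z,ζ) − F^S(z) P^{-1} F^S(ζ)*`.  Then the
problem `AIP` has a unique solution if and only if `‖P^{-1/2} x‖ = 1` or
`K̃_S(z,ζ) ≡ 0` on `D × D`. -/
theorem stmt6
    {X U Y : Type*}
    [NormedAddCommGroup X] [InnerProductSpace ℂ X] [CompleteSpace X]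
    [NormedAddCommGroup U] [InnerProductSpace ℂ U] [CompleteSpace U]
    [NormedAddCommGroup Y] [InnerProductSpace ℂ Y] [CompleteSpace Y]
    (S : ℂ → (U →L[ℂ] Y)) (hS : IsSchur S)
    (T : X →L[ℂ] X) (E : X →L[ℂ] Y) (N : X →L[ℂ] U) (x : X)
    (OET : X → ℂ → Y) (ONT : X → ℂ → U)
    (hOET : ∀ x0 : X, ∀ z ∈ ball (0:ℂ) 1,
      HasSum (fun n : ℕ => z ^ n • E ((T ^ n) x0)) (OET x0 z))
    (hONT : ∀ x0 : X, ∀ z ∈ ball (0:ℂ) 1,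
      HasSum (fun n : ℕ => z ^ n • N ((T ^ n) x0)) (ONT x0 z))
    (FS : ℂ → (X →L[ℂ] Y))
    (hFS : ∀ x0 : X, ∀ z ∈ ball (0:ℂ) 1, FS z x0 = OET x0 z - S z (ONT x0 z))
    (H : Type*) [NormedAddCommGroup H] [InnerProductSpace ℂ H] [CompleteSpace H]
    (J : H →ₗ[ℂ] (ℂ → Y)) (k : ℂ → Y → H) (hH : IsDBRSpace S H J k)
    (MF : X →L[ℂ] H)
    (hMF : ∀ x0 : X, ∀ z ∈ ball (0:ℂ) 1, J (MF x0) z = FS z x0)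
    (P : X →L[ℂ] X) (hP : P = adjoint MF ∘L MF)
    -- `P ≥ x x*`
    (hPx : (P - rankOne x).IsPositive)
    -- `P` is positive definite (boundedly invertible)
    (Pinv : X →L[ℂ] X) (hPinv₁ : P ∘L Pinv = 1) (hPinv₂ : Pinv ∘L P = 1) :
    (∃! f : H, adjoint MF f = x ∧ ‖f‖ ≤ 1) ↔
      (RCLike.re (⟪x, Pinv x⟫_ℂ) = 1 ∨
        ∀ z ∈ ball (0:ℂ) 1, ∀ ζ ∈ ball (0:ℂ) 1,
          dbrKernel S z ζ = (FS z) ∘L Pinv ∘L adjoint (FS ζ)) := by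
  set u := Pinv x with hu
  set fmin := MF u with hfmin
  have hPu : P u = x := by
    have := congrArg (fun A : X →L[ℂ] X => A x) hPinv₁
    simpa using this
  have hPP : ∀ v : X, adjoint MF (MF v) = P v := by
    intro v; rw [hP]; rfl
  -- adjoint of MF applied to fmin is x
  have hadj_fmin : adjoint MF fmin = x := by rw [hfmin, hPP, hPu]
  -- inner value
  have hcval : ⟪x, Pinv x⟫_ℂ = (‖fmin‖:ℂ)^2 := by
    calc ⟪x, Pinv x⟫_ℂ = ⟪P u, u⟫_ℂ := by rw [hPu]
    _ = ⟪adjoint MF (MF u), u⟫_ℂ := by rw [hPP]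
    _ = ⟪MF u, MF u⟫_ℂ := by rw [adjoint_inner_left]
    _ = (‖fmin‖:ℂ)^2 := inner_self_eq_norm_sq_to_K (MF u)
  set α := RCLike.re (⟪x, Pinv x⟫_ℂ) with hα
  have hαval : α = ‖fmin‖^2 := by
    rw [hα, hcval, ← Complex.ofReal_pow]
    exact Complex.ofReal_re _
  have hα0 : 0 ≤ α := by rw [hαval]; positivity
  -- α ≤ 1 from positivity of P - xx*
  have hα1 : α ≤ 1 := by
    have h2 := hPx.2 u
    have hxu : ⟪x, u⟫_ℂ = (α:ℂ) := by
      rw [hu, hcval, hαval]; push_cast; ring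
    have hux : ⟪u, x⟫_ℂ = (α:ℂ) := by
      rw [← inner_conj_symm, hxu]; simp
    have : ContinuousLinearMap.reApplyInnerSelf (P - rankOne x) u = α - α^2 := by
      rw [ContinuousLinearMap.reApplyInnerSelf]
      simp only [rankOne, ContinuousLinearMap.sub_apply, ContinuousLinearMap.smulRight_apply,
        innerSL_apply_apply, inner_sub_left, inner_smul_left, hPu, hxu, hux]
      simp [Complex.ext_iff]; ring
    rw [this] at h2
    nlinarith
  have hfminnorm : ‖fmin‖ ≤ 1 := by
    nlinarith [norm_nonneg fmin]
  -- orthogonality / pythagoras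
  have horth : ∀ g : H, adjoint MF g = 0 → ⟪fmin, g⟫_ℂ = 0 := by
    intro g hg
    rw [hfmin, ← adjoint_inner_right, hg, inner_zero_right]
  have hpyth : ∀ g : H, adjoint MF g = 0 → ‖fmin + g‖^2 = α + ‖g‖^2 := by
    intro g hg
    rw [@norm_add_sq ℂ, horth g hg, hαval]; simp
  -- adjoint MF of kernel elements
  have hMFk : ∀ ζ ∈ ball (0:ℂ) 1, ∀ y : Y,
      adjoint MF (k ζ y) = adjoint (FS ζ) y := by
    intro ζ hζ y
    apply ext_inner_right ℂ
    intro v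
    rw [adjoint_inner_left, adjoint_inner_left, hH.reproducing ζ hζ, hMF v ζ hζ]
  -- KerTriv ↔ Kcond
  have hBC : (∀ g : H, adjoint MF g = 0 → g = 0) ↔
      (∀ z ∈ ball (0:ℂ) 1, ∀ ζ ∈ ball (0:ℂ) 1,
        dbrKernel S z ζ = (FS z) ∘L Pinv ∘L adjoint (FS ζ)) := by
    constructor
    · intro htriv z hz ζ hζ
      ext y
      have hw : adjoint MF (k ζ y - MF (Pinv (adjoint (FS ζ) y))) = 0 := by
        rw [map_sub, hMFk ζ hζ y, hPP]
        have := congrArg (fun A : X →L[ℂ] X => A (adjoint (FS ζ) y)) hPinv₁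
        simp only [ContinuousLinearMap.comp_apply, ContinuousLinearMap.one_apply] at this
        rw [this, sub_self]
      have hw0 := htriv _ hw
      have hkey : k ζ y = MF (Pinv (adjoint (FS ζ) y)) := by
        rwa [sub_eq_zero] at hw0
      have h1 := hH.kernel_eq ζ hζ y z hz
      rw [hkey, hMF _ z hz] at h1
      simp only [ContinuousLinearMap.comp_apply]
      exact h1.symm
    · intro hc g hg
      apply hH.ext g 0
      intro ζ hζ
      have : ∀ y : Y, ⟪y, J g ζ⟫_ℂ = 0 := by
        intro y
        have hkey : k ζ y = MF (Pinv (adjoint (FS ζ) y)) := by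
          apply hH.ext
          intro z hz
          rw [hH.kernel_eq ζ hζ y z hz, hMF _ z hz, hc z hz ζ hζ]
          simp only [ContinuousLinearMap.comp_apply]
        rw [← hH.reproducing ζ hζ, hkey, ← adjoint_inner_right, hg, inner_zero_right]
      have hz0 : J g ζ = 0 := by
        have h := this (J g ζ)
        rwa [inner_self_eq_zero] at h
      rw [hz0, map_zero]; rfl
  constructor
  · rintro ⟨f₀, hf₀, huniq⟩
    by_cases hone : α = 1
    · exact Or.inl hone
    · right
      rw [← hBC]
      intro g hg
      by_contra hg0
      have hgpos : 0 < ‖g‖ := norm_pos_iff.mpr hg0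
      have hαlt : α < 1 := lt_of_le_of_ne hα1 hone
      set t : ℝ := Real.sqrt (1 - α) / ‖g‖ with ht
      have ht0 : 0 < t := div_pos (Real.sqrt_pos.mpr (by linarith)) hgpos
      have hadj2 : adjoint MF (fmin + (t:ℂ) • g) = x := by
        rw [map_add, map_smul, hg, smul_zero, add_zero, hadj_fmin]
      have hsm : adjoint MF ((t:ℂ) • g) = 0 := by rw [map_smul, hg, smul_zero]
      have htg : ‖(t:ℂ) • g‖ = Real.sqrt (1 - α) := by
        rw [norm_smul, Complex.norm_real, Real.norm_eq_abs, abs_of_pos ht0, ht,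
          div_mul_cancel₀ _ (ne_of_gt hgpos)]
      have hnorm2 : ‖fmin + (t:ℂ) • g‖^2 = 1 := by
        rw [hpyth _ hsm, htg, Real.sq_sqrt (by linarith)]
        ring
      have h1 := huniq _ ⟨hadj2, by nlinarith [norm_nonneg (fmin + (t:ℂ) • g)]⟩
      have h2 := huniq fmin ⟨hadj_fmin, hfminnorm⟩
      have heq : fmin + (t:ℂ) • g = fmin := h1.trans h2.symm
      have hzero : (t:ℂ) • g = 0 := by
        have h := heq
        rwa [add_eq_left] at h
      have : g = 0 := by
        have ht0' : (t:ℂ) ≠ 0 := by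
          simp only [ne_eq, Complex.ofReal_eq_zero]
          exact ne_of_gt ht0
        exact (smul_eq_zero.mp hzero).resolve_left ht0'
      exact hg0 this
  · intro hyp
    refine ⟨fmin, ⟨hadj_fmin, hfminnorm⟩, ?_⟩
    rintro f ⟨hfx, hfn⟩
    have hdiff : adjoint MF (f - fmin) = 0 := by
      rw [map_sub, hfx, hadj_fmin, sub_self]
    rcases hyp with hone | hc
    · have hp := hpyth (f - fmin) hdiff
      rw [add_sub_cancel] at hp
      have h0 : ‖f - fmin‖^2 ≤ 0 := by nlinarith [norm_nonneg f]
      have : f - fmin = 0 := by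
        have := norm_nonneg (f - fmin)
        have hn0 : ‖f - fmin‖ = 0 := by nlinarith
        exact norm_eq_zero.mp hn0
      rwa [sub_eq_zero] at this
    · have := (hBC.mpr hc) _ hdiff
      rwa [sub_eq_zero] at this



end
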